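/- arXiv:0810.4518 — 2 statements merged into one kernel-verified Lean document; each statement's English description precedes it below -/
import Mathlib

section
/- Let k be an algebraically closed field of characteristic p > 0 and let d ≥ 1. Let R be a standard-graded k-algebra which is a normal domain (an integral domain integrally closed in its field of fractions), and let φ : P → R be an injective degree-preserving k-algebra homomorphism from the standard-graded polynomial ring P = k[x_0, …, x_d] such that R is a finitely generated P-module (a graded Noether normalization). Let n ≥ d+1, let g_1, …, g_n ∈ P be homogeneous of degrees a_1, …, a_n, and let m ∈ ℕ be such that every homogeneous polynomial of degree m lies in the ideal (g_1, …, g_n) of P. Then every homogeneous element of R of degree m + d + 1 lies in the Frobenius closure of the ideal (φ(g_1), …, φ(g_n)) of R. -/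
open scoped BigOperators

/-- The `q`-th bracket power `I^{[q]}` of an ideal: the ideal generated by all `q`-th
powers of elements of `I`. -/
def bracketPow {R : Type*} [CommRing R] (I : Ideal R) (q : ℕ) : Ideal R :=
  Ideal.span ((fun f => f ^ q) '' (I : Set R))

/-- Frobenius closure of an ideal in a ring of characteristic `p`. -/
def frobeniusClosure {R : Type*} [CommRing R] (p : ℕ) (I : Ideal R) : Set R :=
  {x | ∃ e : ℕ, x ^ p ^ e ∈ bracketPow I (p ^ e)}

/-!
As a module over `P = k[x_0, …, x_d]`, `R` is generated by finitely many homogeneous elements,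
of degrees at most some `B`. Hence for `q = p^e`, the element `r^q` of degree `q(m+d+1)` lies in the
ideal generated by the images of the monomials `x^α` of degree at least `q(m+d+1) - B`. Write
`α = γ + qβ` with all `γ_i < q`: then `deg γ ≤ (d+1)(q-1)`, so once `q > B` the monomial `x^β` has
degree at least `m`. It is therefore divisible by a monomial of degree `m`, which lies in
`(g_1, …, g_n)`, and so `x^α ∈ (g_1, …, g_n)^{[q]}`.
-/

open MvPolynomial DirectSum

theorem map_bracketPow_le {R S : Type*} [CommRing R] [CommRing S] (f : R →+* S) (I : Ideal R)
    (q : ℕ) : (bracketPow I q).map f ≤ bracketPow (I.map f) q := by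
  rw [bracketPow, Ideal.map_span, Ideal.span_le]
  rintro _ ⟨_, ⟨x, hx, rfl⟩, rfl⟩
  exact Ideal.subset_span ⟨f x, Ideal.mem_map_of_mem f hx, (map_pow f x q).symm⟩

theorem monomial_mem_bracketPow {σ K : Type*} [Fintype σ] [CommRing K]
    {I : Ideal (MvPolynomial σ K)} {m q : ℕ}
    (hI : ∀ δ : σ →₀ ℕ, δ.degree = m → monomial δ 1 ∈ I) (hq : 0 < q) {α : σ →₀ ℕ}
    (hα : (m + Fintype.card σ) * q < α.degree + Fintype.card σ + q) :
    monomial α (1 : K) ∈ bracketPow I q := by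
  set γ := α.mapRange (· % q) (Nat.zero_mod q)
  set β := α.mapRange (· / q) (Nat.zero_div q)
  have hsplit : α = γ + q • β := by
    ext i
    exact (Nat.mod_add_div (α i) q).symm
  have hγ : γ.degree + Fintype.card σ ≤ Fintype.card σ * q := by
    have : ∑ i, (γ i + 1) ≤ ∑ _i : σ, q := Finset.sum_le_sum fun i _ => Nat.mod_lt (α i) hq
    simpa [Finsupp.degree_eq_sum, Finset.sum_add_distrib, mul_comm] using this
  have hβ : m ≤ β.degree := by
    have hdeg : α.degree = γ.degree + q * β.degree := by
      conv_lhs => rw [hsplit, map_add, map_nsmul, smul_eq_mul]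
    by_contra! h
    have : q * (β.degree + 1) ≤ q * m := Nat.mul_le_mul_left q h
    nlinarith
  obtain ⟨δ, hδβ, hδ⟩ := Finsupp.exists_le_degree_eq β m hβ
  obtain ⟨ε, hβε⟩ := le_iff_exists_add.mp hδβ
  have hfactor : monomial α (1 : K) = monomial γ 1 * monomial ε 1 ^ q * monomial δ 1 ^ q := by
    rw [monomial_pow, monomial_pow, monomial_mul, monomial_mul, hsplit, hβε]
    congr 1
    · rw [smul_add, add_comm (q • δ), add_assoc]
    · simp
  rw [hfactor]
  exact Ideal.mul_mem_left _ _ (Ideal.subset_span ⟨_, hI δ hδ, rfl⟩)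

section Graded

variable {k σ R : Type*} [CommRing k] [CommRing R] [Algebra k R] (𝒜 : ℕ → Submodule k R)
  [GradedAlgebra 𝒜] {φ : MvPolynomial σ k →ₐ[k] R}

theorem exists_finset_homogeneous_generators (hfin : RingHom.Finite φ.toRingHom) :
    ∃ (B : ℕ) (W : Finset R), (∀ u ∈ W, ∃ b ≤ B, u ∈ 𝒜 b) ∧
      ∀ x : R, ∃ c : R → MvPolynomial σ k, x = ∑ u ∈ W, φ (c u) * u := by
  classical
  let := φ.toRingHom.toAlgebra
  obtain ⟨s, hs⟩ := (hfin : Module.Finite (MvPolynomial σ k) R).fg_top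
  let W := s.biUnion fun y => (decompose 𝒜 y).support.image fun i => (decompose 𝒜 y i : R)
  have hW : ∀ y ∈ s, ∀ i ∈ (decompose 𝒜 y).support, (decompose 𝒜 y i : R) ∈ W :=
    fun y hy i hi => Finset.mem_biUnion.mpr ⟨y, hy, Finset.mem_image_of_mem _ hi⟩
  refine ⟨s.sup fun y => (decompose 𝒜 y).support.sup id, W, ?_, fun x => ?_⟩
  · simp only [W, Finset.mem_biUnion, Finset.mem_image]
    rintro _ ⟨y, hy, i, hi, rfl⟩
    exact ⟨i, (Finset.le_sup (f := id) hi).trans (Finset.le_sup (f := fun y =>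
      (decompose 𝒜 y).support.sup id) hy), SetLike.coe_mem _⟩
  · have hspan : Submodule.span (MvPolynomial σ k) (W : Set R) = ⊤ := by
      refine top_unique (hs ▸ Submodule.span_le.mpr fun y hy => ?_)
      rw [SetLike.mem_coe, ← sum_support_decompose 𝒜 y]
      exact Submodule.sum_mem _ fun i hi => Submodule.subset_span (hW y hy i hi)
    obtain ⟨c, -, hc⟩ := Submodule.mem_span_finset.mp (hspan ▸ Submodule.mem_top (x := x))
    exact ⟨c, hc.symm⟩

theorem exists_forall_mem_span_image_monomial
    (hφdeg : ∀ (n : ℕ) (f : MvPolynomial σ k), f.IsHomogeneous n → φ f ∈ 𝒜 n)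
    (hfin : RingHom.Finite φ.toRingHom) :
    ∃ B : ℕ, ∀ N, ∀ x ∈ 𝒜 N,
      x ∈ Ideal.span ((fun α => φ (monomial α 1)) '' {α | N ≤ α.degree + B}) := by
  obtain ⟨B, W, hW, hspan⟩ := exists_finset_homogeneous_generators 𝒜 hfin
  refine ⟨B, fun N x hx => ?_⟩
  obtain ⟨c, hc⟩ := hspan x
  rw [← decompose_of_mem_same 𝒜 hx, ← GradedRing.proj_apply, hc, map_sum]
  refine Ideal.sum_mem _ fun u hu => ?_
  obtain ⟨b, hbB, hub⟩ := hW u hu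
  rw [← support_sum_monomial_coeff (c u), map_sum, Finset.sum_mul, map_sum]
  refine Ideal.sum_mem _ fun α _ => ?_
  have hmem : φ (monomial α (coeff α (c u))) * u ∈ 𝒜 (α.degree + b) :=
    SetLike.mul_mem_graded (hφdeg _ _ (isHomogeneous_monomial _ rfl)) hub
  rw [GradedRing.proj_apply]
  by_cases hN : α.degree + b = N
  · rw [decompose_of_mem_same 𝒜 (hN ▸ hmem), ← mul_one (coeff α (c u)), ← C_mul_monomial,
      map_mul]
    have hα : N ≤ α.degree + B := by omega
    exact Ideal.mul_mem_right _ _ (Ideal.mul_mem_left _ _ (Ideal.subset_span ⟨α, hα, rfl⟩))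
  · rw [decompose_of_mem_ne 𝒜 hmem hN]
    exact Ideal.zero_mem _

end Graded

theorem generic_frobenius_closure_bound_general
    {k : Type*} [Field k] (p : ℕ) [Fact p.Prime]
    (d : ℕ)
    {R : Type*} [CommRing R] [Algebra k R]
    (𝒜 : ℕ → Submodule k R) [GradedAlgebra 𝒜]
    (φ : MvPolynomial (Fin (d + 1)) k →ₐ[k] R)
    (hφdeg : ∀ (n : ℕ) (f : MvPolynomial (Fin (d + 1)) k),
      f.IsHomogeneous n → φ f ∈ 𝒜 n)
    (hfin : RingHom.Finite φ.toRingHom)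
    (n : ℕ)
    (g : Fin n → MvPolynomial (Fin (d + 1)) k)
    (m : ℕ)
    (hm : ∀ f : MvPolynomial (Fin (d + 1)) k, f.IsHomogeneous m →
      f ∈ Ideal.span (Set.range g)) :
    ∀ r ∈ 𝒜 (m + d + 1),
      r ∈ frobeniusClosure p (Ideal.span (Set.range fun i => φ (g i))) := by
  obtain ⟨B, hB⟩ := exists_forall_mem_span_image_monomial 𝒜 hφdeg hfin
  intro r hr
  refine ⟨B, ?_⟩
  set q := p ^ B
  have hBq : B < q := Nat.lt_pow_self (Fact.out : p.Prime).one_lt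
  have hrq : r ^ q ∈ 𝒜 (q * (m + d + 1)) := by
    simpa only [smul_eq_mul] using SetLike.pow_mem_graded q hr
  refine Ideal.span_le.mpr ?_ (hB _ _ hrq)
  rintro _ ⟨α, hα, rfl⟩
  have hmono : monomial α 1 ∈ bracketPow (Ideal.span (Set.range g)) q := by
    refine monomial_mem_bracketPow (fun δ hδ => hm _ (isHomogeneous_monomial 1 hδ))
      (by omega) ?_
    rw [Fintype.card_fin]
    have hα' : q * (m + d + 1) ≤ α.degree + B := hα
    nlinarith
  have hφmono := map_bracketPow_le φ.toRingHom _ q (Ideal.mem_map_of_mem _ hmono)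
  rwa [Ideal.map_span, ← Set.range_comp] at hφmono

theorem generic_frobenius_closure_bound
    {k : Type*} [Field k] [IsAlgClosed k] (p : ℕ) [Fact p.Prime] [CharP k p]
    (d : ℕ) (hd : 1 ≤ d)
    {R : Type*} [CommRing R] [IsNoetherianRing R] [Algebra k R]
    [IsDomain R] [IsIntegrallyClosed R]
    (𝒜 : ℕ → Submodule k R) [GradedAlgebra 𝒜]
    (hstd : ∀ n, 𝒜 n = 𝒜 1 ^ n)
    (hfd : FiniteDimensional k (𝒜 1))
    (φ : MvPolynomial (Fin (d + 1)) k →ₐ[k] R)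
    (hφinj : Function.Injective φ)
    (hφdeg : ∀ (n : ℕ) (f : MvPolynomial (Fin (d + 1)) k),
      f.IsHomogeneous n → φ f ∈ 𝒜 n)
    (hfin : RingHom.Finite φ.toRingHom)
    (n : ℕ) (hn : d + 1 ≤ n)
    (g : Fin n → MvPolynomial (Fin (d + 1)) k) (a : Fin n → ℕ)
    (hg : ∀ i, (g i).IsHomogeneous (a i))
    (m : ℕ)
    (hm : ∀ f : MvPolynomial (Fin (d + 1)) k, f.IsHomogeneous m →
      f ∈ Ideal.span (Set.range g)) :
    ∀ r ∈ 𝒜 (m + d + 1),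
      r ∈ frobeniusClosure p (Ideal.span (Set.range fun i => φ (g i))) :=
  generic_frobenius_closure_bound_general p d 𝒜 φ hφdeg hfin n g m hm
end

section
/- Let k be a field of characteristic p > 0 and let R be a standard-graded k-algebra of Krull dimension one. Let f ∈ R be homogeneous of degree a ≥ 1 and not contained in any minimal prime of R (the genericity condition), and let I = (f). Then every homogeneous element of R of degree a+1 lies in the Frobenius closure I^F, and every homogeneous element of R of degree a lies in the tight closure I^*. -/
open scoped BigOperators

/-- Tight closure of an ideal in a ring of characteristic `p`. -/
def tightClosure {R : Type*} [CommRing R] (p : ℕ) (I : Ideal R) : Set R :=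
  {x | ∃ u : R, (∀ P ∈ minimalPrimes R, u ∉ P) ∧
    ∃ e₀ : ℕ, ∀ e : ℕ, e₀ ≤ e → u * x ^ p ^ e ∈ bracketPow I (p ^ e)}

/-!
In dimension one, the homogeneous core of a prime containing `f` is a homogeneous prime that is
not minimal, hence maximal, hence contains the irrelevant ideal `R₊`. So `R₊ ⊆ √(f)`, and since
`R` is Noetherian and generated in degree one, `R_n ⊆ (f)` for all `n ≥ c`. Dividing by `f` one
factor at a time gives `R_m ⊆ (f^q) = (f)^[q]` whenever `m ≥ c + q a`. This applies to `r^q` for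
`r ∈ R_{a+1}` and `q = p^c ≥ c`, and to `f^c r^q` for `r ∈ R_a` and every `q`, which makes `f^c`
a test element.
-/

open HomogeneousIdeal

theorem HomogeneousIdeal.toIdeal_irrelevant_le_of_isMaximal {ι σ R : Type*} [DecidableEq ι]
    [AddCommMonoid ι] [PartialOrder ι] [CanonicallyOrderedAdd ι] [CommRing R] [SetLike σ R]
    [AddSubmonoidClass σ R] (𝒜 : ι → σ) [GradedRing 𝒜] {P : HomogeneousIdeal 𝒜}
    (hP : P.toIdeal.IsMaximal) : (irrelevant 𝒜).toIdeal ≤ P.toIdeal := by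
  suffices hne : P.toIdeal ⊔ (irrelevant 𝒜).toIdeal ≠ ⊤ from
    le_sup_right.trans (hP.eq_of_le hne le_sup_left).ge
  intro htop
  obtain ⟨y, hy, z, hz, hyz⟩ := Submodule.mem_sup.mp (htop ▸ Submodule.mem_top : (1 : R) ∈ _)
  have hproj : GradedRing.proj 𝒜 0 y = 1 := by
    rw [← add_zero (GradedRing.proj 𝒜 0 y), ← (mem_irrelevant_iff 𝒜 z).mp hz, ← map_add, hyz,
      GradedRing.proj_apply, DirectSum.decompose_of_mem_same 𝒜 SetLike.GradedOne.one_mem]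
  exact hP.ne_top ((Ideal.eq_top_iff_one _).mpr (hproj ▸ P.isHomogeneous 0 hy))

theorem exists_homogeneous_eq_mul_of_mem_span_singleton {ι σ R : Type*} [DecidableEq ι]
    [AddLeftCancelMonoid ι] [CommRing R] [SetLike σ R] [AddSubmonoidClass σ R] (𝒜 : ι → σ)
    [GradedRing 𝒜] {f r : R} {i j : ι} (hf : f ∈ 𝒜 i) (hr : r ∈ 𝒜 (i + j))
    (hrf : r ∈ Ideal.span {f}) : ∃ s ∈ 𝒜 j, r = f * s := by
  obtain ⟨s, rfl⟩ := Ideal.mem_span_singleton.mp hrf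
  refine ⟨_, SetLike.coe_mem (DirectSum.decompose 𝒜 s j), ?_⟩
  rw [← DirectSum.coe_decompose_mul_add_of_left_mem 𝒜 hf, DirectSum.decompose_of_mem_same 𝒜 hr]

theorem Submodule.pow_le_restrictScalars_pow {k R : Type*} [CommSemiring k] [CommRing R]
    [Algebra k R] {M : Submodule k R} {I : Ideal R} (hM : M ≤ I.restrictScalars k) (n : ℕ) :
    M ^ n ≤ (I ^ n).restrictScalars k := by
  induction n with
  | zero => simp [Ideal.one_eq_top]
  | succ n ih =>
    rw [pow_succ, pow_succ, Submodule.restrictScalars_mul]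
    exact mul_le_mul' ih hM

theorem bracketPow_span_singleton {R : Type*} [CommRing R] (f : R) (q : ℕ) :
    bracketPow (Ideal.span {f}) q = Ideal.span {f ^ q} := by
  refine le_antisymm (Ideal.span_le.mpr ?_) (Ideal.span_le.mpr ?_)
  · rintro _ ⟨g, hg, rfl⟩
    obtain ⟨s, rfl⟩ := Ideal.mem_span_singleton'.mp hg
    exact Ideal.mem_span_singleton.mpr ⟨s ^ q, by ring⟩
  · rintro _ rfl
    exact Ideal.subset_span ⟨f, Ideal.mem_span_singleton_self f, rfl⟩

section NatGraded

variable {σ R : Type*} [CommRing R] [SetLike σ R] [AddSubmonoidClass σ R]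
  (𝒜 : ℕ → σ) [GradedRing 𝒜]

theorem toIdeal_irrelevant_le_radical_span_singleton [Ring.KrullDimLE 1 R] {f : R}
    (hf : SetLike.IsHomogeneousElem 𝒜 f) (hgen : ∀ P ∈ minimalPrimes R, f ∉ P) :
    (irrelevant 𝒜).toIdeal ≤ (Ideal.span {f}).radical := by
  rw [Ideal.radical_eq_sInf]
  refine le_sInf fun P ⟨hfP, hP⟩ => ?_
  have hcore : (P.homogeneousCore 𝒜).toIdeal.IsPrime := hP.homogeneousCore
  have hf_core : f ∈ P.homogeneousCore 𝒜 :=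
    Ideal.mem_homogeneousCore_of_homogeneous_of_mem hf (hfP (Ideal.mem_span_singleton_self f))
  have hmax : (P.homogeneousCore 𝒜).toIdeal.IsMaximal :=
    (Ring.krullDimLE_one_iff.mp inferInstance _ hcore).resolve_left (hgen _ · hf_core)
  exact (toIdeal_irrelevant_le_of_isMaximal 𝒜 hmax).trans (Ideal.toIdeal_homogeneousCore_le 𝒜 P)

theorem mem_span_singleton_pow_of_le_degree {f : R} {a c : ℕ} (hf : f ∈ 𝒜 a)
    (hc : ∀ n, c ≤ n → ∀ r ∈ 𝒜 n, r ∈ Ideal.span {f}) (q : ℕ) :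
    ∀ m, c + q * a ≤ m → ∀ r ∈ 𝒜 m, r ∈ Ideal.span {f ^ q} := by
  induction q with
  | zero => simp [Ideal.span_singleton_one]
  | succ q ih =>
    intro m hm r hr
    rw [add_one_mul] at hm
    obtain ⟨j, rfl⟩ : ∃ j, m = a + j := ⟨m - a, by omega⟩
    obtain ⟨s, hs, rfl⟩ := exists_homogeneous_eq_mul_of_mem_span_singleton 𝒜 hf hr
      (hc _ (by omega) _ hr)
    obtain ⟨t, rfl⟩ := Ideal.mem_span_singleton.mp (ih j (by omega) s hs)
    exact Ideal.mem_span_singleton.mpr ⟨t, by ring⟩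

end NatGraded

theorem exists_forall_le_degree_mem_span_singleton {k R : Type*} [CommSemiring k] [CommRing R]
    [IsNoetherianRing R] [Ring.KrullDimLE 1 R] [Algebra k R] (𝒜 : ℕ → Submodule k R)
    [GradedAlgebra 𝒜] (hstd : ∀ n, 𝒜 n = 𝒜 1 ^ n) {f : R} {a : ℕ} (hf : f ∈ 𝒜 a)
    (hgen : ∀ P ∈ minimalPrimes R, f ∉ P) :
    ∃ c, ∀ n, c ≤ n → ∀ r ∈ 𝒜 n, r ∈ Ideal.span {f} := by
  obtain ⟨c, hc⟩ := Ideal.exists_pow_le_of_le_radical_of_fg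
    (toIdeal_irrelevant_le_radical_span_singleton 𝒜 ⟨a, hf⟩ hgen) (IsNoetherian.noetherian _)
  have hdeg_one : 𝒜 1 ≤ (irrelevant 𝒜).toIdeal.restrictScalars k :=
    fun x hx => mem_irrelevant_of_mem 𝒜 one_pos hx
  refine ⟨c, fun n hn r hr => hc (Ideal.pow_le_pow_right hn ?_)⟩
  rw [hstd] at hr
  exact Submodule.pow_le_restrictScalars_pow hdeg_one n hr

theorem dimension_one_closure_bounds_general
    {k : Type*} [Field k] (p : ℕ) [Fact p.Prime]
    {R : Type*} [CommRing R] [IsNoetherianRing R] [Algebra k R]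
    (𝒜 : ℕ → Submodule k R) [GradedAlgebra 𝒜]
    (hstd : ∀ n, 𝒜 n = 𝒜 1 ^ n)
    (hdim : ringKrullDim R = 1)
    (f : R) (a : ℕ) (ha : 1 ≤ a) (hf : f ∈ 𝒜 a)
    (hgen : ∀ P ∈ minimalPrimes R, f ∉ P) :
    (∀ r ∈ 𝒜 (a + 1), r ∈ frobeniusClosure p (Ideal.span {f})) ∧
      (∀ r ∈ 𝒜 a, r ∈ tightClosure p (Ideal.span {f})) := by
  have : Ring.KrullDimLE 1 R := Ring.krullDimLE_iff.mpr hdim.le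
  obtain ⟨c, hc⟩ := exists_forall_le_degree_mem_span_singleton 𝒜 hstd hf hgen
  have hmem := mem_span_singleton_pow_of_le_degree 𝒜 hf hc
  refine ⟨fun r hr => ⟨c, ?_⟩, fun r hr => ⟨f ^ c, ?_, 0, fun e _ => ?_⟩⟩
  · have hcq : c ≤ p ^ c := (Nat.lt_pow_self (Fact.out : p.Prime).one_lt).le
    rw [bracketPow_span_singleton]
    refine hmem _ _ ?_ _ (SetLike.pow_mem_graded _ hr)
    rw [smul_eq_mul, mul_add_one]
    omega
  · exact fun P hP hfc => hgen P hP (hP.1.1.mem_of_pow_mem c hfc)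
  · rw [bracketPow_span_singleton]
    refine hmem _ _ ?_ _ (SetLike.mul_mem_graded (SetLike.pow_mem_graded c hf)
      (SetLike.pow_mem_graded _ hr))
    rw [smul_eq_mul, smul_eq_mul]
    nlinarith

theorem dimension_one_closure_bounds
    {k : Type*} [Field k] (p : ℕ) [Fact p.Prime] [CharP k p]
    {R : Type*} [CommRing R] [IsNoetherianRing R] [Algebra k R]
    (𝒜 : ℕ → Submodule k R) [GradedAlgebra 𝒜]
    (hstd : ∀ n, 𝒜 n = 𝒜 1 ^ n)
    (hfd : FiniteDimensional k (𝒜 1))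
    (hdim : ringKrullDim R = 1)
    (f : R) (a : ℕ) (ha : 1 ≤ a) (hf : f ∈ 𝒜 a)
    (hgen : ∀ P ∈ minimalPrimes R, f ∉ P) :
    (∀ r ∈ 𝒜 (a + 1), r ∈ frobeniusClosure p (Ideal.span {f})) ∧
      (∀ r ∈ 𝒜 a, r ∈ tightClosure p (Ideal.span {f})) :=
  dimension_one_closure_bounds_general p 𝒜 hstd hdim f a ha hf hgen
end
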